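/- arXiv:1611.00963 — 3 statements merged into one kernel-verified Lean document; each statement's English description precedes it below -/
import Mathlib

section
/- For 1 < k < n, the set of extreme points of the unit ball of the vector k-norm ‖x‖_{(k)} = Σ_{i=1}^k |x|_i^↓ on ℝⁿ equals (1/k)·{−1,1}ⁿ ∪ {±e_i : 1 ≤ i ≤ n}. -/
open Finset

/-- `dsort x i` is the `i`-th entry of the non-increasing rearrangement of `|x|`. -/
noncomputable def dsort {n : ℕ} (x : Fin n → ℝ) : Fin n → ℝ :=
  fun i => |x (Tuple.sort (fun j => |x j|) i.rev)|

/-- The vector `k`-norm `‖x‖_{(k)} = Σ_{i<k} |x|_i^↓`. -/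
noncomputable def kNormU {n : ℕ} (k : ℕ) (x : Fin n → ℝ) : ℝ :=
  ∑ i : Fin n, if (i : ℕ) < k then dsort x i else 0

/-!
With `t` the `k`-th largest `|xᵢ|`, `‖x‖_(k) = k t + Σᵢ (|xᵢ| - t)⁺`; this bounds `Σᵢ wᵢ |xᵢ|`
by `M ‖x‖_(k)` whenever `0 ≤ wᵢ ≤ M` and `Σᵢ wᵢ ≤ k M`. A linear functional bounded by `u` on the
points `±eᵢ` and `ε / k` has coefficients `yᵢ` with `|yᵢ| ≤ u` and `Σᵢ |yᵢ| ≤ k u`, hence is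
bounded by `u` on the whole unit ball; by Hahn–Banach the ball is the convex hull of these
finitely many points, so its extreme points are among them. Conversely `ε / k` is the only point
of the ball where all the functionals `x ↦ Σ_{i ∈ T} εᵢ xᵢ`, `#T = k`, reach their maximum `1`,
and `s eᵢ` is the only one where all `x ↦ s xᵢ ± xⱼ`, `j ≠ i`, do (these are at most
`|xᵢ| + |xⱼ| ≤ ‖x‖_(k)` as `k ≥ 2`); a point singled out by supporting functionals in this way
is extreme.
-/

section KNorm

variable {n k : ℕ}

noncomputable def dsortPerm (x : Fin n → ℝ) : Equiv.Perm (Fin n) :=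
  Fin.revPerm.trans (Tuple.sort fun j => |x j|)

lemma dsort_eq_abs_dsortPerm (x : Fin n → ℝ) (i : Fin n) : dsort x i = |x (dsortPerm x i)| :=
  rfl

lemma antitone_dsort (x : Fin n → ℝ) : Antitone (dsort x) := fun _ _ hij ↦ by
  simpa [dsort] using Tuple.monotone_sort (fun j => |x j|) (Fin.rev_le_rev.2 hij)

lemma kNormU_eq_sum_dsort (k : ℕ) (x : Fin n → ℝ) :
    kNormU k x = ∑ i ∈ univ.filter (fun i : Fin n => (i : ℕ) < k), dsort x i :=
  (sum_filter _ _).symm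

lemma card_filter_val_lt_of_le (hkn : k ≤ n) : #(univ.filter fun i : Fin n => (i : ℕ) < k) = k := by
  rw [Fin.card_filter_val_lt, min_eq_right hkn]

lemma exists_card_eq_kNormU_eq_sum_abs (hkn : k ≤ n) (x : Fin n → ℝ) :
    ∃ T : Finset (Fin n), #T = k ∧ kNormU k x = ∑ i ∈ T, |x i| := by
  refine ⟨(univ.filter fun i : Fin n => (i : ℕ) < k).map (dsortPerm x).toEmbedding, ?_, ?_⟩
  · rw [card_map, card_filter_val_lt_of_le hkn]
  · simp [kNormU_eq_sum_dsort, dsort_eq_abs_dsortPerm]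

lemma exists_kNormU_eq_mul_add_sum_max (hk : 1 ≤ k) (hkn : k ≤ n) (x : Fin n → ℝ) :
    ∃ t, 0 ≤ t ∧ kNormU k x = k * t + ∑ i, max (|x i| - t) 0 := by
  set t := dsort x ⟨k - 1, by omega⟩
  refine ⟨t, abs_nonneg _, ?_⟩
  have hsplit : ∀ i : Fin n, max (dsort x i - t) 0 =
      (if (i : ℕ) < k then dsort x i else 0) - if (i : ℕ) < k then t else 0 := by
    intro i
    split_ifs with hi
    · have : t ≤ dsort x i := antitone_dsort x (Fin.le_def.2 (show (i : ℕ) ≤ k - 1 by omega))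
      exact max_eq_left (sub_nonneg.2 this)
    · have : dsort x i ≤ t := antitone_dsort x (Fin.le_def.2 (show k - 1 ≤ (i : ℕ) by omega))
      simpa using this
  rw [← Equiv.sum_comp (dsortPerm x) fun j => max (|x j| - t) 0]
  simp_rw [← dsort_eq_abs_dsortPerm, hsplit, sum_sub_distrib, ← sum_filter, sum_const,
    card_filter_val_lt_of_le hkn, nsmul_eq_mul, kNormU_eq_sum_dsort]
  ring

lemma sum_mul_abs_le_mul_kNormU (hk : 1 ≤ k) (hkn : k ≤ n) (x w : Fin n → ℝ) {M : ℝ}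
    (hw₀ : ∀ i, 0 ≤ w i) (hwM : ∀ i, w i ≤ M) (hw : ∑ i, w i ≤ k * M) :
    ∑ i, w i * |x i| ≤ M * kNormU k x := by
  obtain ⟨t, ht, hx⟩ := exists_kNormU_eq_mul_add_sum_max hk hkn x
  calc ∑ i, w i * |x i|
      ≤ ∑ i, (M * max (|x i| - t) 0 + w i * t) := by
        gcongr with i
        nlinarith [hw₀ i, hwM i, le_max_left (|x i| - t) 0, le_max_right (|x i| - t) 0]
    _ ≤ M * ∑ i, max (|x i| - t) 0 + k * M * t := by
        rw [sum_add_distrib, ← mul_sum, ← sum_mul]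
        gcongr
    _ = M * kNormU k x := by rw [hx]; ring

lemma sum_abs_le_kNormU (hk : 1 ≤ k) (hkn : k ≤ n) (x : Fin n → ℝ) {T : Finset (Fin n)}
    (hT : #T ≤ k) : ∑ i ∈ T, |x i| ≤ kNormU k x := by
  have := sum_mul_abs_le_mul_kNormU hk hkn x (fun i => if i ∈ T then 1 else 0) (M := 1)
    (fun i => by positivity) (fun i => by split_ifs <;> norm_num)
    (by simpa [sum_boole] using hT)
  simpa [ite_mul, sum_ite_mem] using this

lemma convexOn_kNormU (hk : 1 ≤ k) (hkn : k ≤ n) : ConvexOn ℝ Set.univ (kNormU (n := n) k) := by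
  refine ⟨convex_univ, fun x _ y _ a b ha hb _ => ?_⟩
  obtain ⟨T, hT, hxy⟩ := exists_card_eq_kNormU_eq_sum_abs hkn (a • x + b • y)
  calc kNormU k (a • x + b • y) = ∑ i ∈ T, |a * x i + b * y i| := by simp [hxy]
    _ ≤ ∑ i ∈ T, (a * |x i| + b * |y i|) := by
        gcongr with i
        calc |a * x i + b * y i| ≤ |a * x i| + |b * y i| := abs_add_le _ _
          _ = a * |x i| + b * |y i| := by rw [abs_mul, abs_mul, abs_of_nonneg ha, abs_of_nonneg hb]
    _ = a * ∑ i ∈ T, |x i| + b * ∑ i ∈ T, |y i| := by rw [sum_add_distrib, mul_sum, mul_sum]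
    _ ≤ a • kNormU k x + b • kNormU k y := by
        simp only [smul_eq_mul]
        gcongr <;> exact sum_abs_le_kNormU hk hkn _ hT.le

lemma kNormU_sign_div (hkn : k ≤ n) (hk : k ≠ 0) {ε : Fin n → ℝ}
    (hε : ∀ i, ε i = 1 ∨ ε i = -1) : kNormU k (fun i => ε i / k) = 1 := by
  obtain ⟨T, hT, h⟩ := exists_card_eq_kNormU_eq_sum_abs hkn fun i => ε i / k
  have habs : ∀ i, |ε i / k| = 1 / k := fun i => by
    rcases hε i with h | h <;> simp [h, abs_div]
  simp [h, habs, hT, hk]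

lemma kNormU_single_le (hkn : k ≤ n) (i : Fin n) (s : ℝ) :
    kNormU k (Pi.single i s) ≤ |s| := by
  obtain ⟨T, -, h⟩ := exists_card_eq_kNormU_eq_sum_abs hkn (Pi.single i s)
  rw [h]
  calc ∑ j ∈ T, |Pi.single i s j| ≤ ∑ j, |Pi.single (M := fun _ => ℝ) i s j| :=
        sum_le_sum_of_subset_of_nonneg (subset_univ T) fun _ _ _ => abs_nonneg _
    _ = |s| := by simp [Pi.single_apply, apply_ite]

end KNorm

def kNormBallVertices (n k : ℕ) : Set (Fin n → ℝ) :=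
  {x | ∃ ε : Fin n → ℝ, (∀ i, ε i = 1 ∨ ε i = -1) ∧ x = fun i => ε i / (k : ℝ)} ∪
    {x | ∃ i : Fin n, x = Pi.single i (1 : ℝ) ∨ x = -Pi.single i (1 : ℝ)}

lemma kNormBallVertices_finite (n k : ℕ) : (kNormBallVertices n k).Finite := by
  refine .union ?_ ?_
  · refine ((Set.Finite.pi' fun _ => ({1, -1} : Set ℝ).toFinite).image
      fun ε i => ε i / (k : ℝ)).subset ?_
    rintro x ⟨ε, hε, rfl⟩
    exact ⟨ε, hε, rfl⟩
  · refine (Set.finite_iUnion fun i : Fin n =>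
      ({Pi.single i 1, -Pi.single i 1} : Set (Fin n → ℝ)).toFinite).subset ?_
    rintro x ⟨i, hx⟩
    exact Set.mem_iUnion.2 ⟨i, hx⟩

section Vertices

variable {n k : ℕ}

lemma kNormBallVertices_subset (hk : 1 ≤ k) (hkn : k ≤ n) :
    kNormBallVertices n k ⊆ {x | kNormU k x ≤ 1} := by
  rintro x (⟨ε, hε, rfl⟩ | ⟨i, rfl | rfl⟩) <;> simp only [Set.mem_ofPred_eq]
  · exact (kNormU_sign_div hkn (by omega) hε).le
  · simpa using kNormU_single_le hkn i (1 : ℝ)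
  · simpa [← Pi.single_neg] using kNormU_single_le hkn i (-1 : ℝ)

lemma apply_le_of_forall_kNormBallVertices (hk : 1 ≤ k) (hkn : k ≤ n)
    (f : (Fin n → ℝ) →ₗ[ℝ] ℝ) {u : ℝ} (hf : ∀ v ∈ kNormBallVertices n k, f v ≤ u)
    {x : Fin n → ℝ} (hx : kNormU k x ≤ 1) : f x ≤ u := by
  set y : Fin n → ℝ := fun i => f (Pi.single i 1)
  have hfy : ∀ z, f z = ∑ i, z i * y i := fun z => by
    conv_lhs => rw [← univ_sum_single z]
    rw [map_sum]
    refine sum_congr rfl fun i _ => ?_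
    rw [← smul_eq_mul, ← map_smul, ← Pi.single_smul, smul_eq_mul, mul_one]
  have hyu : ∀ i, |y i| ≤ u := fun i => abs_le.2
    ⟨neg_le.1 (by simpa using hf _ (.inr ⟨i, .inr rfl⟩)), hf _ (.inr ⟨i, .inl rfl⟩)⟩
  have hsum : ∑ i, |y i| ≤ k * u := by
    set ε : Fin n → ℝ := fun i => if 0 ≤ y i then 1 else -1
    have hε : ∀ i, ε i = 1 ∨ ε i = -1 := fun i => by by_cases h : 0 ≤ y i <;> simp [ε, h]
    have hεy : ∀ i, ε i / k * y i = |y i| / k := fun i => by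
      by_cases h : 0 ≤ y i
      · simp only [ε, if_pos h, abs_of_nonneg h]; ring
      · simp only [ε, if_neg h, abs_of_neg (not_le.1 h)]; ring
    have := hf _ (.inl ⟨ε, hε, rfl⟩)
    rw [hfy] at this
    simp_rw [hεy, ← sum_div] at this
    rwa [div_le_iff₀ (by positivity), mul_comm] at this
  have hu : 0 ≤ u := nonneg_of_mul_nonneg_right
    ((sum_nonneg fun i _ => abs_nonneg (y i)).trans hsum) (by positivity)
  calc f x = ∑ i, x i * y i := hfy x
    _ ≤ ∑ i, |y i| * |x i| := by
        refine sum_le_sum fun i _ => (le_abs_self _).trans_eq ?_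
        rw [abs_mul, mul_comm]
    _ ≤ u * kNormU k x :=
        sum_mul_abs_le_mul_kNormU hk hkn x _ (fun i => abs_nonneg _) hyu hsum
    _ ≤ u := mul_le_of_le_one_right hu hx

lemma kNormBall_eq_convexHull (hk : 1 ≤ k) (hkn : k ≤ n) :
    {x : Fin n → ℝ | kNormU k x ≤ 1} = convexHull ℝ (kNormBallVertices n k) := by
  refine subset_antisymm (fun x hx => ?_) (convexHull_min (kNormBallVertices_subset hk hkn)
    (by simpa using (convexOn_kNormU hk hkn).convex_le 1))
  by_contra hxV
  obtain ⟨f, u, hfu, hux⟩ := geometric_hahn_banach_closed_point (convex_convexHull ℝ _)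
    ((kNormBallVertices_finite n k).isCompact_convexHull ℝ).isClosed hxV
  exact hux.not_ge <| apply_le_of_forall_kNormBallVertices hk hkn f.toLinearMap
    (fun v hv => (hfu v (subset_convexHull ℝ _ hv)).le) hx

end Vertices

theorem mem_extremePoints_of_supporting {𝕜 E : Type*} [Field 𝕜] [LinearOrder 𝕜]
    [IsStrictOrderedRing 𝕜] [AddCommGroup E] [Module 𝕜 E] {C : Set E} {v : E}
    (Φ : Set (E →ₗ[𝕜] 𝕜)) (hΦC : ∀ φ ∈ Φ, ∀ x ∈ C, φ x ≤ 1) (hΦv : ∀ φ ∈ Φ, φ v = 1)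
    (hv : v ∈ C) (hΦ : ∀ x, (∀ φ ∈ Φ, φ x = 1) → x = v) : v ∈ C.extremePoints 𝕜 := by
  refine ⟨hv, fun x₁ hx₁ x₂ hx₂ ⟨a, b, ha, hb, hab, hv⟩ => hΦ x₁ fun φ hφ => ?_⟩
  have h := hΦv φ hφ
  rw [← hv, map_add, map_smul, map_smul, smul_eq_mul, smul_eq_mul] at h
  nlinarith [hΦC φ hφ x₁ hx₁, hΦC φ hφ x₂ hx₂]

theorem eq_div_of_forall_sum_card_eq {ι : Type*} [Fintype ι] [DecidableEq ι] {g : ι → ℝ}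
    {k : ℕ} {c : ℝ} (hk : 1 ≤ k) (hkι : k < Fintype.card ι)
    (hg : ∀ T : Finset ι, #T = k → ∑ i ∈ T, g i = c) (i : ι) : g i = c / k := by
  have hconst : ∀ j, g j = g i := by
    intro j
    rcases eq_or_ne j i with rfl | hji
    · rfl
    obtain ⟨S, hS, hScard⟩ := exists_subset_card_eq (s := univ \ {i, j}) (n := k - 1)
      (by rw [card_sdiff_of_subset (subset_univ _), card_univ, card_pair hji.symm]; omega)
    have hiS : i ∉ S := fun h => by simpa using hS h
    have hjS : j ∉ S := fun h => by simpa using hS h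
    have hTi := hg (insert i S) (by rw [card_insert_of_notMem hiS, hScard]; omega)
    have hTj := hg (insert j S) (by rw [card_insert_of_notMem hjS, hScard]; omega)
    rw [sum_insert hiS] at hTi
    rw [sum_insert hjS] at hTj
    linarith
  obtain ⟨T, -, hT⟩ := exists_subset_card_eq (s := (univ : Finset ι)) (n := k)
    (by rw [card_univ]; omega)
  have := hg T hT
  rw [sum_congr rfl fun j _ => hconst j, sum_const, hT, nsmul_eq_mul] at this
  rw [← this, mul_div_cancel_left₀ _ (by positivity)]

section Extreme

variable {n k : ℕ}

lemma sign_div_mem_extremePoints (hk : 1 ≤ k) (hkn : k < n) {ε : Fin n → ℝ}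
    (hε : ∀ i, ε i = 1 ∨ ε i = -1) :
    (fun i => ε i / (k : ℝ)) ∈ Set.extremePoints ℝ {x : Fin n → ℝ | kNormU k x ≤ 1} := by
  have hε2 : ∀ i, ε i * ε i = 1 := fun i => by rcases hε i with h | h <;> simp [h]
  refine mem_extremePoints_of_supporting
    {φ | ∃ T : Finset (Fin n), #T = k ∧ φ = ∑ i ∈ T, ε i • LinearMap.proj i}
    ?_ ?_ (kNormU_sign_div hkn.le (by omega) hε).le ?_
  · rintro _ ⟨T, hT, rfl⟩ x hx
    calc (∑ i ∈ T, ε i • LinearMap.proj i : (Fin n → ℝ) →ₗ[ℝ] ℝ) x = ∑ i ∈ T, ε i * x i := by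
          simp
      _ ≤ ∑ i ∈ T, |x i| := sum_le_sum fun i _ => (le_abs_self _).trans_eq <| by
          rcases hε i with h | h <;> simp [h]
      _ ≤ 1 := (sum_abs_le_kNormU hk hkn.le x hT.le).trans hx
  · rintro _ ⟨T, hT, rfl⟩
    simp [mul_div_assoc', hε2, hT, show (k : ℝ) ≠ 0 by positivity]
  · intro x hx
    have := eq_div_of_forall_sum_card_eq (g := fun i => ε i * x i) hk (by simpa using hkn)
      fun T hT => by simpa using hx _ ⟨T, hT, rfl⟩
    funext i
    rw [← one_mul (x i), ← hε2 i, mul_assoc, this i, mul_one_div]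

lemma single_mem_extremePoints (hk : 1 < k) (hkn : k ≤ n) (i : Fin n) {s : ℝ}
    (hs : s = 1 ∨ s = -1) :
    Pi.single i s ∈ Set.extremePoints ℝ {x : Fin n → ℝ | kNormU k x ≤ 1} := by
  have hs2 : s * s = 1 := by rcases hs with rfl | rfl <;> norm_num
  have : Nontrivial (Fin n) := Fin.nontrivial_iff_two_le.2 (by omega)
  obtain ⟨j₀, hj₀⟩ := exists_ne i
  refine mem_extremePoints_of_supporting
    {φ | ∃ j ≠ i, ∃ t : ℝ, (t = 1 ∨ t = -1) ∧ φ = s • LinearMap.proj i + t • LinearMap.proj j}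
    ?_ ?_ ((kNormU_single_le hkn i s).trans (by rcases hs with rfl | rfl <;> norm_num)) ?_
  · rintro _ ⟨j, hji, t, ht, rfl⟩ x hx
    have hpair :=
      sum_abs_le_kNormU (by omega) hkn x (T := {i, j}) ((card_pair hji.symm).trans_le hk)
    rw [sum_pair hji.symm] at hpair
    have hsx : s * x i ≤ |x i| := (le_abs_self _).trans_eq <| by rcases hs with rfl | rfl <;> simp
    have htx : t * x j ≤ |x j| := (le_abs_self _).trans_eq <| by rcases ht with rfl | rfl <;> simp
    simp only [LinearMap.add_apply, LinearMap.smul_apply, LinearMap.proj_apply, smul_eq_mul]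
    linarith [hx.trans' hpair]
  · rintro _ ⟨j, hji, t, ht, rfl⟩
    simp [hji, hs2]
  · intro x hx
    have hpm : ∀ j ≠ i, s * x i + x j = 1 ∧ s * x i - x j = 1 := fun j hji => by
      constructor
      · simpa using hx _ ⟨j, hji, 1, .inl rfl, rfl⟩
      · simpa [sub_eq_add_neg] using hx _ ⟨j, hji, -1, .inr rfl, rfl⟩
    have hxi : x i = s := by
      have := hpm j₀ hj₀
      linear_combination s * (this.1 + this.2) / 2 - x i * hs2
    funext j
    rcases eq_or_ne j i with rfl | hji
    · simpa using hxi
    · have := hpm j hji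
      simp only [Pi.single_apply, hji, if_false]
      linarith

end Extreme

/-- (2.1): for `1 < k < n` the extreme points of the unit ball of the vector
`k`-norm are exactly `(1/k)·{-1,1}ⁿ ∪ {±e_i}`. -/
theorem extreme_points_k_norm_ball {n k : ℕ} (hk : 1 < k) (hkn : k < n) :
    Set.extremePoints ℝ {x : Fin n → ℝ | kNormU k x ≤ 1} =
      {x : Fin n → ℝ | ∃ ε : Fin n → ℝ,
          (∀ i, ε i = 1 ∨ ε i = -1) ∧ x = fun i => ε i / (k : ℝ)} ∪
      {x : Fin n → ℝ | ∃ i : Fin n,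
          x = Pi.single i (1 : ℝ) ∨ x = -Pi.single i (1 : ℝ)} := by
  refine subset_antisymm ?_ ?_
  · rw [kNormBall_eq_convexHull hk.le hkn.le]
    exact extremePoints_convexHull_subset
  · rintro x (⟨ε, hε, rfl⟩ | ⟨i, rfl | rfl⟩)
    · exact sign_div_mem_extremePoints hk.le hkn hε
    · exact single_mem_extremePoints hk hkn.le i (.inl rfl)
    · rw [← Pi.single_neg]
      exact single_mem_extremePoints hk hkn.le i (.inr rfl)
end

section
/- The dual norm of the vector k-norm ‖x‖_{(k)} = Σ_{i=1}^k |x|_i^↓ on ℝⁿ is x ↦ max(‖x‖_∞, ‖x‖₁/k). -/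
/-
Write `M = max(‖x‖_∞, ‖x‖₁/k)` and let `t` be the `k`-th largest entry of `|y|`. Then
`‖y‖_{(k)} = k t + Σ_i (|y_i| - t)⁺`, and splitting `|y_i| ≤ (|y_i| - t)⁺ + t` gives
`⟨x, y⟩ ≤ ‖x‖_∞ Σ_i (|y_i| - t)⁺ + ‖x‖₁ t ≤ M ‖y‖_{(k)}`. The bound `M` is attained on the
unit ball of the `k`-norm by `sign(x_i) e_i` with `|x_i|` maximal, and by `sign(x) / k`.
-/

open Finset

/-- The dual norm of a norm `N` on `ℝⁿ`. -/
noncomputable def dualNorm {n : ℕ} (N : (Fin n → ℝ) → ℝ) (x : Fin n → ℝ) : ℝ :=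
  sSup {r | ∃ y : Fin n → ℝ, N y ≤ 1 ∧ r = ∑ i, x i * y i}

lemma dsort_nonneg {n : ℕ} (x : Fin n → ℝ) (i : Fin n) : 0 ≤ dsort x i := abs_nonneg _

lemma dsort_antitone {n : ℕ} (x : Fin n → ℝ) : Antitone (dsort x) :=
  fun _ _ hij => Tuple.monotone_sort (fun j => |x j|) (Fin.rev_le_rev.mpr hij)

lemma sum_comp_dsort {n : ℕ} (x : Fin n → ℝ) (g : ℝ → ℝ) :
    ∑ i, g (dsort x i) = ∑ i, g |x i| :=
  Fintype.sum_equiv (Fin.revPerm.trans (Tuple.sort fun j => |x j|)) _ _ fun _ => rfl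

lemma sum_ite_val_lt_const {n k : ℕ} (hkn : k ≤ n) (c : ℝ) :
    ∑ i : Fin n, (if (i : ℕ) < k then c else 0) = k * c := by
  rw [sum_ite, sum_const_zero, add_zero, sum_const, Fin.card_filter_val_lt, min_eq_right hkn,
    nsmul_eq_mul]

lemma kNormU_le_sum_abs {n : ℕ} (k : ℕ) (y : Fin n → ℝ) : kNormU k y ≤ ∑ i, |y i| :=
  calc kNormU k y ≤ ∑ i, dsort y i :=
        sum_le_sum fun i _ => by split_ifs <;> simp [dsort_nonneg]
    _ = ∑ i, |y i| := sum_comp_dsort y id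

lemma kNormU_le_of_abs_le {n k : ℕ} (hkn : k ≤ n) {y : Fin n → ℝ} {c : ℝ}
    (hy : ∀ i, |y i| ≤ c) : kNormU k y ≤ k * c :=
  calc kNormU k y ≤ ∑ i : Fin n, (if (i : ℕ) < k then c else 0) :=
        sum_le_sum fun i _ => by split_ifs; exacts [hy _, le_rfl]
    _ = k * c := sum_ite_val_lt_const hkn c

lemma kNormU_eq_mul_add_sum_posPart {n k : ℕ} (y : Fin n → ℝ) (i : Fin n)
    (hi : (i : ℕ) + 1 = k) :
    kNormU k y = k * dsort y i + ∑ j, max (|y j| - dsort y i) 0 := by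
  have hkn : k ≤ n := hi ▸ i.isLt
  have hterm : ∀ j : Fin n, max (dsort y j - dsort y i) 0
      = (if (j : ℕ) < k then dsort y j else 0) - (if (j : ℕ) < k then dsort y i else 0) := by
    intro j
    split_ifs with hj
    · exact max_eq_left (sub_nonneg.mpr (dsort_antitone y (Fin.le_def.mpr (by omega))))
    · rw [max_eq_right (sub_nonpos.mpr (dsort_antitone y (Fin.le_def.mpr (by omega)))), sub_zero]
  rw [← sum_comp_dsort y fun s => max (s - dsort y i) 0, sum_congr rfl fun j _ => hterm j,
    sum_sub_distrib, sum_ite_val_lt_const hkn, kNormU]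
  ring

lemma sum_mul_le_mul_add_sum_posPart {ι : Type*} [Fintype ι] {x : ι → ℝ} {a c t : ℝ}
    (hx : ∀ i, |x i| ≤ a) (hx₁ : ∑ i, |x i| ≤ c * a) (ht : 0 ≤ t) (y : ι → ℝ) :
    ∑ i, x i * y i ≤ a * (c * t + ∑ i, max (|y i| - t) 0) :=
  calc ∑ i, x i * y i ≤ ∑ i, (|x i| * max (|y i| - t) 0 + |x i| * t) :=
        sum_le_sum fun i _ => by
          rw [← mul_add]
          calc x i * y i ≤ |x i| * |y i| := (le_abs_self _).trans (abs_mul _ _).le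
            _ ≤ |x i| * (max (|y i| - t) 0 + t) :=
              mul_le_mul_of_nonneg_left (by linarith [le_max_left (|y i| - t) 0]) (abs_nonneg _)
    _ = ∑ i, |x i| * max (|y i| - t) 0 + (∑ i, |x i|) * t := by rw [sum_add_distrib, sum_mul]
    _ ≤ ∑ i, a * max (|y i| - t) 0 + (c * a) * t := by
        gcongr with i _
        exact hx i
    _ = a * (c * t + ∑ i, max (|y i| - t) 0) := by rw [← mul_sum]; ring

lemma sum_mul_le_max_mul_kNormU {n k : ℕ} (hk1 : 1 ≤ k) (hkn : k ≤ n) (x y : Fin n → ℝ) :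
    ∑ i, x i * y i ≤ max (⨆ i, |x i|) ((∑ i, |x i|) / k) * kNormU k y := by
  have hk : (0 : ℝ) < k := by exact_mod_cast hk1
  have hx : ∀ i, |x i| ≤ max (⨆ i, |x i|) ((∑ i, |x i|) / k) :=
    fun i => (le_ciSup (f := fun i => |x i|) (Set.finite_range _).bddAbove i).trans
      (le_max_left _ _)
  have hx₁ : ∑ i, |x i| ≤ k * max (⨆ i, |x i|) ((∑ i, |x i|) / k) := by
    rw [← div_le_iff₀' hk]; exact le_max_right _ _
  let i : Fin n := ⟨k - 1, by omega⟩
  rw [kNormU_eq_mul_add_sum_posPart y i (by simp [i]; omega)]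
  exact sum_mul_le_mul_add_sum_posPart hx hx₁ (dsort_nonneg y i) y

lemma abs_coe_sign_le_one {α : Type*} [Ring α] [LinearOrder α] [IsStrictOrderedRing α] (r : α) :
    |(SignType.sign r : α)| ≤ 1 := by
  rcases SignType.sign r with _ | _ | _ <;> simp

lemma exists_kNormU_le_one_sum_mul_eq_iSup_abs {n : ℕ} [NeZero n] (k : ℕ) (x : Fin n → ℝ) :
    ∃ y, kNormU k y ≤ 1 ∧ ⨆ i, |x i| = ∑ i, x i * y i := by
  obtain ⟨i₀, -, hi₀⟩ := exists_max_image univ (fun i => |x i|) univ_nonempty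
  refine ⟨Pi.single i₀ (SignType.sign (x i₀)), ?_, ?_⟩
  · refine (kNormU_le_sum_abs k _).trans ?_
    simpa [Pi.single_apply, apply_ite] using abs_coe_sign_le_one (x i₀)
  · simp only [Pi.single_apply, mul_ite, mul_zero, sum_ite_eq', mem_univ, if_true, self_mul_sign]
    exact le_antisymm (ciSup_le fun i => hi₀ i (mem_univ _))
      (le_ciSup (f := fun i => |x i|) (Set.finite_range _).bddAbove i₀)

lemma exists_kNormU_le_one_sum_mul_eq_sum_abs_div {n k : ℕ} (hk1 : 1 ≤ k) (hkn : k ≤ n)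
    (x : Fin n → ℝ) : ∃ y, kNormU k y ≤ 1 ∧ (∑ i, |x i|) / k = ∑ i, x i * y i := by
  have hk : (0 : ℝ) < k := by exact_mod_cast hk1
  refine ⟨fun i => SignType.sign (x i) / k, ?_, ?_⟩
  · calc kNormU k _ ≤ k * (1 / k) := kNormU_le_of_abs_le hkn fun i => by
          rw [abs_div, abs_of_pos hk]
          exact div_le_div_of_nonneg_right (abs_coe_sign_le_one _) hk.le
      _ = 1 := by field_simp
  · simp only [sum_div, ← self_mul_sign, mul_div_assoc]

theorem dual_of_k_norm_general {n k : ℕ} (hk1 : 1 ≤ k) (hkn : k ≤ n)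
    (x : Fin n → ℝ) :
    dualNorm (kNormU k) x = max (⨆ i : Fin n, |x i|) ((∑ i, |x i|) / (k : ℝ)) := by
  have : NeZero n := ⟨by omega⟩
  refine IsGreatest.csSup_eq ⟨?_, ?_⟩
  · rcases max_choice (⨆ i, |x i|) ((∑ i, |x i|) / (k : ℝ)) with h | h <;> rw [h]
    exacts [exists_kNormU_le_one_sum_mul_eq_iSup_abs k x,
      exists_kNormU_le_one_sum_mul_eq_sum_abs_div hk1 hkn x]
  · rintro _ ⟨y, hy, rfl⟩
    have hM : 0 ≤ max (⨆ i, |x i|) ((∑ i, |x i|) / (k : ℝ)) :=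
      (div_nonneg (sum_nonneg fun i _ => abs_nonneg _) k.cast_nonneg).trans (le_max_right _ _)
    calc ∑ i, x i * y i ≤ max (⨆ i, |x i|) ((∑ i, |x i|) / k) * kNormU k y :=
          sum_mul_le_max_mul_kNormU hk1 hkn x y
      _ ≤ max (⨆ i, |x i|) ((∑ i, |x i|) / k) := mul_le_of_le_one_right hM hy

/-- The dual norm of the vector `k`-norm is `max(‖x‖_∞, ‖x‖₁/k)`. -/
theorem dual_of_k_norm {n k : ℕ} (hn : 0 < n) (hk1 : 1 ≤ k) (hkn : k ≤ n)
    (x : Fin n → ℝ) :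
    dualNorm (kNormU k) x = max (⨆ i : Fin n, |x i|) ((∑ i, |x i|) / (k : ℝ)) :=
  dual_of_k_norm_general hk1 hkn x
end

section
/- With λ the uniform probability measure on {1,…,n}, the derivation (∂f)_{ij} = (f_i − f_j)/√2, the left module action (f·A)_{ij} = f_i A_{ij} on ℝ^{n×n}, and Θ_f the matrix with (Θ_f)_{ij} = (f_i + f_j)/(2n) for i ≠ j and zero row sums, one has ∂*(f·∂g) = −Θ_f g for all f, g ∈ ℝⁿ. -/
open Finset

/-- The derivation `(∂f)_{ij} = (f_i − f_j)/√2`. -/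
noncomputable def der {n : ℕ} (f : Fin n → ℝ) : Matrix (Fin n) (Fin n) ℝ :=
  Matrix.of fun i j => (f i - f j) / Real.sqrt 2

/-- The matrix `Θ_f`: off-diagonal entries `(f_i + f_j)/(2n)`, diagonal entries
chosen so that all row sums vanish. -/
noncomputable def Theta {n : ℕ} (f : Fin n → ℝ) : Matrix (Fin n) (Fin n) ℝ :=
  Matrix.of fun i j =>
    if i = j then -∑ l ∈ Finset.univ.erase i, (f i + f l) / (2 * n)
    else (f i + f j) / (2 * n)

lemma theta_mulVec {n : ℕ} (f g : Fin n → ℝ) (i : Fin n) :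
    (Theta f).mulVec g i = ∑ j, (f i + f j) / (2 * n) * (g j - g i) := by
  have h : (Theta f).mulVec g i = ∑ j, Theta f i j * g j := rfl
  rw [h, ← Finset.add_sum_erase _ _ (Finset.mem_univ i),
      ← Finset.add_sum_erase _ (fun j => (f i + f j) / (2 * n) * (g j - g i))
        (Finset.mem_univ i)]
  have h1 : ∀ j ∈ Finset.univ.erase i, Theta f i j * g j
      = (f i + f j) / (2 * n) * g j := by
    intro j hj
    simp [Theta, (Finset.ne_of_mem_erase hj).symm]
  rw [Finset.sum_congr rfl h1]
  have hdiag : Theta f i i = -∑ l ∈ Finset.univ.erase i, (f i + f l) / (2 * n) := by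
    simp [Theta]
  rw [hdiag]
  simp only [mul_sub, sub_self, mul_zero, zero_add, Finset.sum_sub_distrib,
    ← Finset.sum_mul, neg_mul]
  abel

/-- `∂*(f·∂g) = −Θ_f g`, expressed through the defining property of the adjoint
`∂*` with respect to the inner products `⟨u,v⟩ = n⁻¹Σ u_i v_i` on `ℝⁿ` and
`⟨A,B⟩ = n⁻²Σ A_{ij}B_{ij}` on `ℝ^{n×n}`, with the left action
`(f·A)_{ij} = f_i A_{ij}`: for all `v`, `⟨f·∂g, ∂v⟩ = ⟨−Θ_f g, v⟩`. -/
theorem der_adjoint_left_action {n : ℕ} (f g : Fin n → ℝ) (v : Fin n → ℝ) :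
    ((n : ℝ) ^ 2)⁻¹ * ∑ i, ∑ j, (f i * der g i j) * der v i j =
      (n : ℝ)⁻¹ * ∑ i, (-(Theta f).mulVec g) i * v i := by
  rcases Nat.eq_zero_or_pos n with hn | hn
  · subst hn; simp
  have hn' : (n : ℝ) ≠ 0 := Nat.cast_ne_zero.mpr hn.ne'
  have hs2 : Real.sqrt 2 * Real.sqrt 2 = 2 := Real.mul_self_sqrt (by norm_num)
  have hL : ∀ i j, (f i * der g i j) * der v i j
      = f i * (g i - g j) * (v i - v j) / 2 := by
    intro i j
    simp only [der, Matrix.of_apply]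
    rw [show f i * ((g i - g j) / Real.sqrt 2) * ((v i - v j) / Real.sqrt 2)
        = f i * (g i - g j) * (v i - v j) / (Real.sqrt 2 * Real.sqrt 2) by ring, hs2]
  have hR : ∀ i, (-(Theta f).mulVec g) i * v i
      = ∑ j, (f i + f j) * (g i - g j) * v i / (2 * n) := by
    intro i
    rw [Pi.neg_apply, theta_mulVec, neg_mul, Finset.sum_mul, ← Finset.sum_neg_distrib]
    apply Finset.sum_congr rfl
    intro j _
    ring
  simp only [hL, hR]
  -- key combinatorial identity
  have key : ∑ i : Fin n, ∑ j : Fin n, f i * (g i - g j) * (v i - v j)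
      = ∑ i : Fin n, ∑ j : Fin n, (f i + f j) * (g i - g j) * v i := by
    have hswap : ∑ i : Fin n, ∑ j : Fin n, f i * (g i - g j) * v j
        = ∑ i : Fin n, ∑ j : Fin n, f j * (g j - g i) * v i :=
      Finset.sum_comm
    calc ∑ i : Fin n, ∑ j : Fin n, f i * (g i - g j) * (v i - v j)
        = ∑ i : Fin n, ∑ j : Fin n, (f i * (g i - g j) * v i
            - f i * (g i - g j) * v j) := by
          apply Finset.sum_congr rfl; intro i _
          apply Finset.sum_congr rfl; intro j _
          ring
      _ = (∑ i : Fin n, ∑ j : Fin n, f i * (g i - g j) * v i)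
            - ∑ i : Fin n, ∑ j : Fin n, f i * (g i - g j) * v j := by
          simp [Finset.sum_sub_distrib]
      _ = (∑ i : Fin n, ∑ j : Fin n, f i * (g i - g j) * v i)
            - ∑ i : Fin n, ∑ j : Fin n, f j * (g j - g i) * v i := by rw [hswap]
      _ = ∑ i : Fin n, ∑ j : Fin n, (f i + f j) * (g i - g j) * v i := by
          rw [← Finset.sum_sub_distrib]
          apply Finset.sum_congr rfl; intro i _
          rw [← Finset.sum_sub_distrib]
          apply Finset.sum_congr rfl; intro j _
          ring
  simp only [← Finset.sum_div]
  have hsc : ∀ s : ℝ, ((n : ℝ) ^ 2)⁻¹ * (s / 2) = (n : ℝ)⁻¹ * (s / (2 * n)) := by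
    intro s
    rw [pow_two, mul_inv, div_eq_mul_inv, div_eq_mul_inv, mul_inv]
    ring
  rw [key]
  exact hsc _
end
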